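/- arXiv:0812.2225 — 3 statements merged into one kernel-verified Lean document; each statement's English description precedes it below -/
import Mathlib

section
/- Let R be a skew invertible R-matrix on V⊗V with skew inverse Ψ and D := Tr_{(2)}Ψ. Let 𝔄 be a unital associative ℂ-algebra and Y an m×m matrix with entries in 𝔄. Then for each sign ε = ±1, the partial R-trace over the second factor satisfies Tr_{(2)}(D₂ · R₁₂^{ε} Y₁ R₁₂^{−ε}) = Tr_R(Y) · I, where Y₁ := Y⊗I is the m²×m² matrix over 𝔄 acting as Y in the first factor, R acts by its scalar entries, and Tr_R(Y) := Σ_{i,j} D_{ji} Y_{ij} ∈ 𝔄. -/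
/-!
The left-hand sides are `𝔄`-linear in `Y` with scalar coefficients, so everything reduces to
the scalar identity `∑ D_{bd} S_{(i,d),(k,l)} S'_{(p,l),(j,b)} = δᵢⱼ D_{pk}` for
`(S, S') = (R^ε, R^{-ε})`. Contract its left-hand side `G_{kp}` with `R_{(x,k),(y,p)}`: the mixed
braid relation `R₁^{-ε} R₂ R₁^ε = R₂^ε R₁ R₂^{-ε}` rewrites the contraction as
`R^{-ε} Tr₍₂₎(R₁₂ D₂) R^ε`, and the first skew-invertibility relation gives `Tr₍₂₎(R₁₂ D₂) = I`,
so the contraction is `δₓᵧ δᵢⱼ`. The second relation says that contracting with `R` is undone by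
contracting with `Ψ`, which recovers `G_{kp} = δᵢⱼ D_{pk}`.
-/
namespace QCB

open Matrix

/-- operators on `V`, `V = ℂ^m` (entries in `A`) -/
abbrev M1 (m : ℕ) (A : Type*) := Matrix (Fin m) (Fin m) A
/-- operators on `V ⊗ V` -/
abbrev M2 (m : ℕ) (A : Type*) := Matrix (Fin m × Fin m) (Fin m × Fin m) A
/-- operators on `V ⊗ V ⊗ V` -/
abbrev M3 (m : ℕ) (A : Type*) :=
  Matrix (Fin m × Fin m × Fin m) (Fin m × Fin m × Fin m) A
/-- operators on `V^{⊗k}` -/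
abbrev MN (m k : ℕ) (A : Type*) := Matrix (Fin k → Fin m) (Fin k → Fin m) A

/-- Kronecker delta -/
def kd (A : Type*) [Zero A] [One A] {ι : Type*} [DecidableEq ι] (a b : ι) : A :=
  if a = b then 1 else 0

variable {m : ℕ} {A : Type*}

section emb
variable [NonAssocSemiring A]

/-- `X ⊗ I` on `V ⊗ V` -/
def f1 (X : M1 m A) : M2 m A := Matrix.of fun p q => X p.1 q.1 * kd A p.2 q.2
/-- `I ⊗ X` on `V ⊗ V` -/
def f2 (X : M1 m A) : M2 m A := Matrix.of fun p q => kd A p.1 q.1 * X p.2 q.2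
/-- `X ⊗ I ⊗ I` on `V^{⊗3}` -/
def e1 (X : M1 m A) : M3 m A :=
  Matrix.of fun p q => X p.1 q.1 * (kd A p.2.1 q.2.1 * kd A p.2.2 q.2.2)
/-- `I ⊗ I ⊗ X` on `V^{⊗3}` -/
def e3 (X : M1 m A) : M3 m A :=
  Matrix.of fun p q => kd A p.1 q.1 * (kd A p.2.1 q.2.1 * X p.2.2 q.2.2)
/-- `X₁₂` on `V^{⊗3}` -/
def e12 (X : M2 m A) : M3 m A :=
  Matrix.of fun p q => X (p.1, p.2.1) (q.1, q.2.1) * kd A p.2.2 q.2.2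
/-- `X₂₃` on `V^{⊗3}` -/
def e23 (X : M2 m A) : M3 m A :=
  Matrix.of fun p q => kd A p.1 q.1 * X (p.2.1, p.2.2) (q.2.1, q.2.2)

/-- partial trace over the 1st of three factors -/
def tr1of3 (X : M3 m A) : M2 m A :=
  Matrix.of fun p q => ∑ a : Fin m, X (a, p.1, p.2) (a, q.1, q.2)
/-- partial trace over the 2nd of three factors -/
def tr2of3 (X : M3 m A) : M2 m A :=
  Matrix.of fun p q => ∑ b : Fin m, X (p.1, b, p.2) (q.1, b, q.2)
/-- partial trace over the 3rd of three factors -/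
def tr3of3 (X : M3 m A) : M2 m A :=
  Matrix.of fun p q => ∑ c : Fin m, X (p.1, p.2, c) (q.1, q.2, c)
/-- partial trace over the 1st of two factors -/
def tr1of2 (X : M2 m A) : M1 m A :=
  Matrix.of fun i j => ∑ a : Fin m, X (a, i) (a, j)
/-- partial trace over the 2nd of two factors -/
def tr2of2 (X : M2 m A) : M1 m A :=
  Matrix.of fun i j => ∑ b : Fin m, X (i, b) (j, b)

/-- permutation operator `P` on `V ⊗ V` -/
def permP (m : ℕ) (A : Type*) [NonAssocSemiring A] : M2 m A :=
  Matrix.of fun p q => kd A p.1 q.2 * kd A p.2 q.1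

/-- `D := Tr₍₂₎ Ψ` -/
def Dmat (Ψ : M2 m A) : M1 m A := tr2of2 Ψ
/-- `C := Tr₍₁₎ Ψ` -/
def Cmat (Ψ : M2 m A) : M1 m A := tr1of2 Ψ

end emb

section ops
variable [Semiring A]

/-- braid (Yang–Baxter) relation `R₁R₂R₁ = R₂R₁R₂` on `V^{⊗3}` -/
def IsBraid (R : M2 m A) : Prop :=
  e12 R * e23 R * e12 R = e23 R * e12 R * e23 R

/-- skew invertibility: `Tr₍₂₎(R₁₂ Ψ₂₃) = Tr₍₂₎(Ψ₁₂ R₂₃) = P₁₃` -/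
def SkewPair (R Ψ : M2 m A) : Prop :=
  tr2of3 (e12 R * e23 Ψ) = permP m A ∧ tr2of3 (e12 Ψ * e23 R) = permP m A

/-- `X` acting in the `i`-th of `k` factors -/
def op1At (k : ℕ) (X : M1 m A) (i : Fin k) : MN m k A :=
  Matrix.of fun a b =>
    X (a i) (b i) * (if ∀ l, l ≠ i → a l = b l then 1 else 0)

/-- `X` acting in the factor with (0-based) number `i` (junk = identity out of range) -/
def op1Nat (k : ℕ) (X : M1 m A) (i : ℕ) : MN m k A :=
  if h : i < k then op1At k X ⟨i, h⟩ else 1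

/-- a two-factor operator acting in factors `i`, `j` of `k` factors -/
def op2At (k : ℕ) (X : M2 m A) (i j : Fin k) : MN m k A :=
  Matrix.of fun a b =>
    X (a i, a j) (b i, b j) * (if ∀ l, l ≠ i → l ≠ j → a l = b l then 1 else 0)

/-- `X_{i+1}` : the two-factor operator acting in the (0-based) factors `i`, `i+1`
of `k` factors (junk = identity when out of range) -/
def RAt (k : ℕ) (X : M2 m A) (i : ℕ) : MN m k A :=
  if h : i + 1 < k then op2At k X ⟨i, Nat.lt_of_succ_lt h⟩ ⟨i + 1, h⟩ else 1

/-- extend an operator on `V^{⊗k}` by the identity in a new last factor -/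
def extendOne {k : ℕ} (X : MN m k A) : MN m (k + 1) A :=
  Matrix.of fun a b => X (Fin.init a) (Fin.init b) * kd A (a (Fin.last k)) (b (Fin.last k))

/-- partial trace over the last factor -/
def ptrLast {k : ℕ} (X : MN m (k + 1) A) : MN m k A :=
  Matrix.of fun a b => ∑ e : Fin m, X (Fin.snoc a e) (Fin.snoc b e)

/-- partial trace over the last `i` factors -/
def ptrLastN (k i : ℕ) (X : MN m (k + i) A) : MN m k A :=
  Matrix.of fun a b => ∑ t : Fin i → Fin m, X (Fin.append a t) (Fin.append b t)

/-- partial trace over the factors `2, …, k+1`, the result acting on the first factor -/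
def ptrTail {k : ℕ} (X : MN m (k + 1) A) : M1 m A :=
  Matrix.of fun i j => ∑ t : Fin k → Fin m, X (Fin.cons i t) (Fin.cons j t)

/-- `X₁ X₂ ⋯ X_j` (1-based labels) -/
def Rchain (K : ℕ) (X : M2 m A) : ℕ → MN m K A
  | 0 => 1
  | j + 1 => Rchain K X j * RAt K X j

/-- `X_j ⋯ X₂ X₁` (1-based labels) -/
def RchainRev (K : ℕ) (X : M2 m A) : ℕ → MN m K A
  | 0 => 1
  | j + 1 => RAt K X j * RchainRev K X j

/-- R-copies: `Lbar K R R' L j = L_{\overline{j+1}}`, i.e.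
`L_{\overline 1} = L₁`, `L_{\overline{j+1}} = R_j L_{\overline j} R_j⁻¹` -/
def Lbar (K : ℕ) (R R' : M2 m A) (L : M1 m A) : ℕ → MN m K A
  | 0 => op1Nat K L 0
  | j + 1 => RAt K R j * Lbar K R R' L j * RAt K R' j

/-- `Lunder K R R' L j = L_{\underline{j+1}}` -/
def Lunder (K : ℕ) (R R' : M2 m A) (L : M1 m A) : ℕ → MN m K A
  | 0 => op1Nat K L 0
  | j + 1 => RAt K R' j * Lunder K R R' L j * RAt K R j

/-- `L_{\overline 1} L_{\overline 2} ⋯ L_{\overline j}` -/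
def LbarChain (K : ℕ) (R R' : M2 m A) (L : M1 m A) : ℕ → MN m K A
  | 0 => 1
  | j + 1 => LbarChain K R R' L j * Lbar K R R' L j

/-- `L_{\underline j} ⋯ L_{\underline 2} L_{\underline 1}` -/
def LunderChainRev (K : ℕ) (R R' : M2 m A) (L : M1 m A) : ℕ → MN m K A
  | 0 => 1
  | j + 1 => Lunder K R R' L j * LunderChainRev K R R' L j

/-- `T₁ T₂ ⋯ T_j` -/
def opChain (K : ℕ) (T : M1 m A) : ℕ → MN m K A
  | 0 => 1
  | j + 1 => opChain K T j * op1Nat K T j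

/-- Jucys–Murphy operators: `Jop K X j = J_{j+1}`, `J₁ = I`, `J_{j+1} = X_j J_j X_j` -/
def Jop (K : ℕ) (X : M2 m A) : ℕ → MN m K A
  | 0 => 1
  | j + 1 => RAt K X j * Jop K X j * RAt K X j

/-- `J₁ J₂ ⋯ J_j` -/
def Jprod (K : ℕ) (X : M2 m A) : ℕ → MN m K A
  | 0 => 1
  | j + 1 => Jprod K X j * Jop K X j

/-- `Υ^{(j)}` : `Υ^{(0)} = Υ^{(1)} = 1`, `Υ^{(j+1)} = (X₁ ⋯ X_j) Υ^{(j)}` -/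
def Ups (K : ℕ) (X : M2 m A) : ℕ → MN m K A
  | 0 => 1
  | j + 1 => Rchain K X j * Ups K X j

end ops

/-- `D₁ D₂ ⋯ D_k` on `V^{⊗k}` -/
def DProdMat (m k : ℕ) (D : M1 m ℂ) : MN m k ℂ :=
  Matrix.of fun a b => ∏ i : Fin k, D (a i) (b i)

/-- `D_{i+1} ⋯ D_{2i}` on `V^{⊗2i}` -/
def DTailMat (m i : ℕ) (D : M1 m ℂ) : MN m (i + i) ℂ :=
  Matrix.of fun a b =>
    ∏ l : Fin (i + i), if i ≤ (l : ℕ) then D (a l) (b l) else kd ℂ (a l) (b l)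

/-- the q-number `i_q = (q^i - q^{-i})/(q - q^{-1})` -/
noncomputable def qnum (q : ℂ) (i : ℕ) : ℂ := (q ^ i - q⁻¹ ^ i) / (q - q⁻¹)

/-- Hecke condition `(R - q)(R + q⁻¹) = 0` -/
def IsHecke {m : ℕ} (R : M2 m ℂ) (q : ℂ) : Prop :=
  (R - q • 1) * (R + q⁻¹ • 1) = 0

/-- the antisymmetrizers `A^{(i)}` on `V^{⊗i}` -/
noncomputable def asym {m : ℕ} (R : M2 m ℂ) (q : ℂ) : (i : ℕ) → MN m i ℂ
  | 0 => 1
  | 1 => 1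
  | i + 2 =>
    (qnum q (i + 1) / qnum q (i + 2)) •
      (extendOne (asym R q (i + 1)) *
        ((q ^ (i + 1) / qnum q (i + 1)) • (1 : MN m (i + 2) ℂ) - RAt (i + 2) R i) *
        extendOne (asym R q (i + 1)))

/-- `R` is a `GL_q(n)`-type R-matrix: Hecke, `i_q ≠ 0` for `i = 2, …, n`,
`A^{(n)}((qⁿ/n_q)I − R_n)A^{(n)} = 0` on `V^{⊗(n+1)}`, and `rank A^{(n)} = 1`. -/
def IsGLqType {m : ℕ} (R : M2 m ℂ) (q : ℂ) (n : ℕ) : Prop :=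
  q ≠ 0 ∧ IsHecke R q ∧ (∀ i, 2 ≤ i → i ≤ n → qnum q i ≠ 0) ∧
    extendOne (asym R q n) *
        ((q ^ n / qnum q n) • (1 : MN m (n + 1) ℂ) - RAt (n + 1) R (n - 1)) *
        extendOne (asym R q n) = 0 ∧
    (asym R q n).rank = 1

/-- lift a complex matrix to a matrix over the ℂ-algebra `A` -/
def lft (A : Type*) [Ring A] [Algebra ℂ A] {ι : Type*} (X : Matrix ι ι ℂ) :
    Matrix ι ι A := X.map (algebraMap ℂ A)

/-- product of `f β` over all `β` satisfying `p` (in increasing order of `β`) -/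
def listProd {α : Type*} [Monoid α] {n : ℕ} (p : Fin n → Bool) (f : Fin n → α) : α :=
  (((List.finRange n).filter p).map f).prod

/-- elementary symmetric function `e_i(μ₁,…,μ_n)` (ordered products) -/
def esym {A : Type*} [Semiring A] (n : ℕ) (μ : Fin n → A) (i : ℕ) : A :=
  ∑ s ∈ Finset.univ.powersetCard i, ((Finset.sort s (· ≤ ·)).map μ).prod

/-- the spectral projector built from a matrix `L`:
`∏_{β ≠ α} (L - c μ_β I) (c (μ_α - μ_β))⁻¹`, where `ν α β` stands for `(μ_α - μ_β)⁻¹` -/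
noncomputable def projGen {m n : ℕ} {A : Type*} [Ring A] [Algebra ℂ A] (c : ℂ)
    (L : M1 m A) (μ : Fin n → A) (ν : Fin n → Fin n → A) (α : Fin n) : M1 m A :=
  listProd (fun β => decide (β ≠ α))
    (fun β => (L - Matrix.diagonal fun _ => c • μ β) * Matrix.diagonal fun _ => c⁻¹ • ν α β)

/-- `ch`-type element `Tr_{(1..i)}(D₁⋯D_i · A^{(i)} · L_{\bar1}⋯L_{\bar i})` -/
noncomputable def chElem {m : ℕ} (D : M1 m ℂ) (Rc : M2 m ℂ) (q : ℂ) {A : Type*}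
    [Ring A] [Algebra ℂ A] (Rl Rl' : M2 m A) (L : M1 m A) (i : ℕ) : A :=
  Matrix.trace (lft A (DProdMat m i D) * lft A (asym Rc q i) * LbarChain i Rl Rl' L i)

end QCB

namespace QCB

open Matrix

variable {m : ℕ} {K : Type*}

section Semiring

variable [Semiring K]

lemma e12_mul (X Y : M2 m K) : e12 (X * Y) = e12 X * e12 Y := by
  ext ⟨p₁, p₂, p₃⟩ ⟨q₁, q₂, q₃⟩
  simp [e12, Matrix.mul_apply, kd, Fintype.sum_prod_type, mul_ite, ite_mul]

lemma e23_mul (X Y : M2 m K) : e23 (X * Y) = e23 X * e23 Y := by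
  ext ⟨p₁, p₂, p₃⟩ ⟨q₁, q₂, q₃⟩
  simp [e23, Matrix.mul_apply, kd, Fintype.sum_prod_type, Finset.mul_sum, mul_ite, ite_mul]

lemma e12_one : e12 (1 : M2 m K) = 1 := by
  ext ⟨p₁, p₂, p₃⟩ ⟨q₁, q₂, q₃⟩
  simp only [e12, Matrix.one_apply, kd, Prod.ext_iff, ite_and, Matrix.of_apply]
  split_ifs <;> simp_all

lemma e23_one : e23 (1 : M2 m K) = 1 := by
  ext ⟨p₁, p₂, p₃⟩ ⟨q₁, q₂, q₃⟩
  simp only [e23, Matrix.one_apply, kd, Prod.ext_iff, ite_and, Matrix.of_apply]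
  split_ifs <;> simp_all

lemma IsBraid.mixed_left {R R' : M2 m K} (hR : IsBraid R) (hRR' : R * R' = 1)
    (hR'R : R' * R = 1) : e12 R' * e23 R * e12 R = e23 R * e12 R * e23 R' := by
  have h := congrArg (fun X => e12 R' * X * e23 R') hR
  simp only [mul_assoc] at h
  simpa only [← mul_assoc, ← e12_mul, ← e23_mul, hR'R, hRR', e12_one, e23_one, one_mul,
    mul_one] using h.symm

lemma IsBraid.mixed_right {R R' : M2 m K} (hR : IsBraid R) (hRR' : R * R' = 1)
    (hR'R : R' * R = 1) : e12 R * e23 R * e12 R' = e23 R' * e12 R * e23 R := by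
  have h := congrArg (fun X => e23 R' * X * e12 R') hR
  simp only [mul_assoc] at h
  simpa only [← mul_assoc, ← e12_mul, ← e23_mul, hR'R, hRR', e12_one, e23_one, one_mul,
    mul_one] using h.symm

lemma e12_mul_e23_mul_e12_apply (X Y Z : M2 m K) (i d e k l f : Fin m) :
    (e12 X * e23 Y * e12 Z) (i, d, e) (k, l, f)
      = ∑ a, ∑ c, ∑ b, X (i, d) (a, b) * Y (b, e) (c, f) * Z (a, c) (k, l) := by
  simp [e12, e23, Matrix.mul_apply, kd, Fintype.sum_prod_type, Finset.sum_mul,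
    mul_ite, ite_mul]

lemma e23_mul_e12_mul_e23_apply (X Y Z : M2 m K) (i d e k l f : Fin m) :
    (e23 X * e12 Y * e23 Z) (i, d, e) (k, l, f)
      = ∑ c, ∑ b, ∑ a, X (d, e) (a, b) * Y (i, a) (k, c) * Z (c, b) (l, f) := by
  simp [e12, e23, Matrix.mul_apply, kd, Fintype.sum_prod_type, Finset.sum_mul,
    mul_ite, ite_mul]

lemma mul_eq_one_apply {S T : M2 m K} (h : S * T = 1) (i d k l : Fin m) :
    ∑ a, ∑ b, S (i, d) (a, b) * T (a, b) (k, l) = kd K i k * kd K d l := by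
  have hc := congrFun (congrFun h (i, d)) (k, l)
  rw [Matrix.mul_apply, Fintype.sum_prod_type, Matrix.one_apply] at hc
  rw [hc]
  by_cases h1 : i = k <;> by_cases h2 : d = l <;> simp [kd, h1, h2]

end Semiring

section CommSemiring

variable [CommSemiring K]

namespace SkewPair

variable {R Ψ : M2 m K}

lemma sum_R_mul_Ψ (h : SkewPair R Ψ) (x y u v : Fin m) :
    ∑ b, ∑ c, R (x, b) (y, c) * Ψ (c, u) (b, v) = kd K x v * kd K u y := by
  have hc := congrFun (congrFun h.1 (x, u)) (y, v)
  simpa [tr2of3, e12, e23, permP, Matrix.mul_apply, kd, Fintype.sum_prod_type,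
    mul_ite, ite_mul] using hc

lemma sum_Ψ_mul_R (h : SkewPair R Ψ) (x y u v : Fin m) :
    ∑ b, ∑ c, Ψ (x, b) (y, c) * R (c, u) (b, v) = kd K x v * kd K u y := by
  have hc := congrFun (congrFun h.2 (x, u)) (y, v)
  simpa [tr2of3, e12, e23, permP, Matrix.mul_apply, kd, Fintype.sum_prod_type,
    mul_ite, ite_mul] using hc

lemma sum_R_mul_Dmat (h : SkewPair R Ψ) (x y : Fin m) :
    ∑ b, ∑ c, R (x, b) (y, c) * Dmat Ψ c b = kd K x y := by
  calc ∑ b, ∑ c, R (x, b) (y, c) * Dmat Ψ c b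
      = ∑ u, ∑ b, ∑ c, R (x, b) (y, c) * Ψ (c, u) (b, u) := by
        simp only [Dmat, tr2of2, Matrix.of_apply, Finset.mul_sum]
        exact Finset.sum_comm_cycle
    _ = kd K x y := by simp [h.sum_R_mul_Ψ, kd]

lemma eq_mul_Dmat_of_sum_mul_R (h : SkewPair R Ψ) {G : Fin m → Fin m → K} {w : K}
    (hG : ∀ x y, ∑ a, ∑ c, G a c * R (x, a) (y, c) = kd K x y * w) (a c : Fin m) :
    G a c = w * Dmat Ψ c a := by
  calc G a c = ∑ a', ∑ c', G a' c' * (kd K c c' * kd K a' a) := by simp [kd]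
    _ = ∑ a', ∑ c', G a' c' * ∑ x, ∑ y, Ψ (c, x) (a, y) * R (y, a') (x, c') := by
        simp only [h.sum_Ψ_mul_R]
    _ = ∑ x, ∑ y, Ψ (c, x) (a, y) * ∑ a', ∑ c', G a' c' * R (y, a') (x, c') := by
        simp only [Finset.mul_sum, mul_left_comm (G _ _)]
        exact Finset.sum_comm_cycle.trans
          (Finset.sum_congr rfl fun _ _ => Finset.sum_comm_cycle)
    _ = ∑ x, ∑ y, Ψ (c, x) (a, y) * (kd K y x * w) := by simp only [hG]
    _ = w * Dmat Ψ c a := by simp [kd, Dmat, tr2of2, Finset.mul_sum, mul_comm]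

lemma sum_Dmat_mul_conj (h : SkewPair R Ψ) {S T S' T' : M2 m K} (hST : S * T = 1)
    (hbr : e12 S * e23 R * e12 T = e23 T' * e12 R * e23 S') (i j k p : Fin m) :
    ∑ d, ∑ b, ∑ l, Dmat Ψ b d * T' (i, d) (k, l) * S' (p, l) (j, b) =
      kd K i j * Dmat Ψ p k := by
  refine h.eq_mul_Dmat_of_sum_mul_R
    (G := fun k p => ∑ d, ∑ b, ∑ l, Dmat Ψ b d * T' (i, d) (k, l) * S' (p, l) (j, b))
    (fun x y => ?_) k p
  calc ∑ k, ∑ p,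
        (∑ d, ∑ b, ∑ l, Dmat Ψ b d * T' (i, d) (k, l) * S' (p, l) (j, b)) * R (x, k) (y, p)
      = ∑ d, ∑ b, Dmat Ψ b d * (e23 T' * e12 R * e23 S') (x, i, d) (y, j, b) := by
        simp only [e23_mul_e12_mul_e23_apply, Finset.mul_sum, Finset.sum_mul,
          ← Fintype.sum_prod_type']
        exact Fintype.sum_equiv ⟨fun ⟨k, p, d, b, l⟩ => (d, b, p, l, k),
          fun ⟨d, b, p, l, k⟩ => (k, p, d, b, l), fun _ => rfl, fun _ => rfl⟩ _ _
          fun _ => by simp only [Equiv.coe_fn_mk]; ring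
    _ = ∑ d, ∑ b, Dmat Ψ b d *
          ∑ a, ∑ c, ∑ b', S (x, i) (a, b') * R (b', d) (c, b) * T (a, c) (y, j) := by
        simp only [← hbr, e12_mul_e23_mul_e12_apply]
    _ = ∑ a, ∑ c, ∑ b',
          S (x, i) (a, b') * (∑ d, ∑ b, R (b', d) (c, b) * Dmat Ψ b d) * T (a, c) (y, j) := by
        simp only [Finset.mul_sum, Finset.sum_mul, ← Fintype.sum_prod_type']
        exact Fintype.sum_equiv ⟨fun ⟨d, b, a, c, b'⟩ => (a, c, b', d, b),
          fun ⟨a, c, b', d, b⟩ => (d, b, a, c, b'), fun _ => rfl, fun _ => rfl⟩ _ _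
          fun _ => by simp only [Equiv.coe_fn_mk]; ring
    _ = ∑ a, ∑ b', S (x, i) (a, b') * T (a, b') (y, j) := by simp [h.sum_R_mul_Dmat, kd]
    _ = kd K x y * kd K i j := mul_eq_one_apply hST x i y j

end SkewPair

end CommSemiring

section Algebra

variable {A : Type*} [Ring A] [Algebra ℂ A]

lemma tr2of2_conj_f1_apply (D : M1 m ℂ) (S S' : M2 m ℂ) (Y : M1 m A) (i j : Fin m) :
    tr2of2 (f2 (lft A D) * lft A S * f1 Y * lft A S') i j
      = ∑ k, ∑ p, algebraMap ℂ A
          (∑ d, ∑ b, ∑ l, D b d * S (i, d) (k, l) * S' (p, l) (j, b)) * Y k p := by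
  simp only [tr2of2, f1, f2, lft, kd, Matrix.mul_apply, Matrix.map_apply, of_apply,
    Fintype.sum_prod_type, mul_ite, ite_mul, mul_one, one_mul, mul_zero, zero_mul,
    Finset.sum_ite_eq, Finset.sum_ite_eq', Finset.sum_ite_irrel, Finset.sum_const_zero,
    Finset.mem_univ, if_true, Finset.sum_mul, Finset.mul_sum, mul_assoc, map_sum, map_mul]
  simp only [← Fintype.sum_prod_type']
  exact Fintype.sum_equiv ⟨fun ⟨b, p, l, d, k⟩ => (k, p, d, b, l),
    fun ⟨k, p, d, b, l⟩ => (b, p, l, d, k), fun _ => rfl, fun _ => rfl⟩ _ _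
    fun _ => by simp only [Equiv.coe_fn_mk]; rw [← Algebra.commutes]

lemma tr2of2_conj_f1_eq_diagonal {D : M1 m ℂ} {S S' : M2 m ℂ}
    (h : ∀ i j k p,
      ∑ d, ∑ b, ∑ l, D b d * S (i, d) (k, l) * S' (p, l) (j, b) = kd ℂ i j * D p k)
    (Y : M1 m A) :
    tr2of2 (f2 (lft A D) * lft A S * f1 Y * lft A S') =
      Matrix.diagonal (fun _ => ∑ i, ∑ j, algebraMap ℂ A (D j i) * Y i j) := by
  ext i j
  rw [tr2of2_conj_f1_apply]
  simp only [h]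
  rcases eq_or_ne i j with rfl | hij
  · simp [kd]
  · simp [kd, hij]

end Algebra

end QCB

open QCB Matrix

theorem statement1_general {m : ℕ} (R R' Ψ : M2 m ℂ)
    (hbraid : IsBraid R) (hRR' : R * R' = 1) (hR'R : R' * R = 1)
    (hskew : SkewPair R Ψ)
    (A : Type*) [Ring A] [Algebra ℂ A] (Y : M1 m A) :
    tr2of2 (f2 (lft A (Dmat Ψ)) * lft A R * f1 Y * lft A R') =
      Matrix.diagonal
        (fun _ => ∑ i : Fin m, ∑ j : Fin m, algebraMap ℂ A (Dmat Ψ j i) * Y i j) ∧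
    tr2of2 (f2 (lft A (Dmat Ψ)) * lft A R' * f1 Y * lft A R) =
      Matrix.diagonal
        (fun _ => ∑ i : Fin m, ∑ j : Fin m, algebraMap ℂ A (Dmat Ψ j i) * Y i j) :=
  ⟨tr2of2_conj_f1_eq_diagonal (hskew.sum_Dmat_mul_conj hR'R (hbraid.mixed_left hRR' hR'R)) Y,
    tr2of2_conj_f1_eq_diagonal (hskew.sum_Dmat_mul_conj hRR' (hbraid.mixed_right hRR' hR'R)) Y⟩

/-- The R-trace property `Tr₍₂₎(D₂ R^ε Y₁ R^{-ε}) = Tr_R(Y)·I` for matrices `Y` over a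
ℂ-algebra `𝔄`, for both signs `ε = ±1`. -/
theorem statement1 {m : ℕ} (hm : 1 ≤ m) (R R' Ψ : M2 m ℂ)
    (hbraid : IsBraid R) (hRR' : R * R' = 1) (hR'R : R' * R = 1)
    (hskew : SkewPair R Ψ)
    (A : Type*) [Ring A] [Algebra ℂ A] (Y : M1 m A) :
    tr2of2 (f2 (lft A (Dmat Ψ)) * lft A R * f1 Y * lft A R') =
      Matrix.diagonal
        (fun _ => ∑ i : Fin m, ∑ j : Fin m, algebraMap ℂ A (Dmat Ψ j i) * Y i j) ∧
    tr2of2 (f2 (lft A (Dmat Ψ)) * lft A R' * f1 Y * lft A R) =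
      Matrix.diagonal
        (fun _ => ∑ i : Fin m, ∑ j : Fin m, algebraMap ℂ A (Dmat Ψ j i) * Y i j) :=
  statement1_general R R' Ψ hbraid hRR' hR'R hskew A Y
end

section
/- Let R be an invertible operator on V⊗V satisfying the braid relation, 𝔄 a unital associative ℂ-algebra, and L an m×m matrix over 𝔄 satisfying the reflection equation L₁R₁₂L₁R₁₂ = R₁₂L₁R₁₂L₁. Then for every k ≥ 1 the two products of R-copies coincide: L_{\bar1}L_{\bar2}⋯L_{\bar k} = L_{\underline k}⋯L_{\underline 2}L_{\underline 1} as matrices over 𝔄 indexed by k-tuples. -/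
open QCB Matrix

/-!
Write `u_j = L_{\underline{j+1}}` and `a_j = R_{j+1}`, so that `u_{j+1} = a_j⁻¹ u_j a_j` and
`L_{\bar{j+2}} = a_j L_{\bar{j+1}} a_j⁻¹`, and let `U_j = u_{j-1} ⋯ u_0`. Since `u_j` commutes
with `a_{j+1}`, the braid relation carries the reflection equation `u a u a = a u a u` from
`(u_j, a_j)` to `(u_{j+1}, a_{j+1})`. As `U_j` commutes with `a_j`, the reflection equation in the
form `u_j a_j u_j a_j⁻¹ = a_j⁻¹ u_j a_j u_j` turns `U_j L_{\bar{j+1}} = u_j U_j` into the same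
identity for `j + 1`; by induction `L_{\bar 1} ⋯ L_{\bar{j+1}} = U_j L_{\bar{j+1}} = U_{j+1}`.
The commutations hold because operators acting in disjoint sets of tensor factors commute when
one of them has central entries, as the entries of `R` do.
-/

section Monoid

variable {M : Type*} [Monoid M] {a a' b b' u v w : M}

theorem mul_mul_inv_eq_of_braid (haa' : a * a' = 1) (hb'b : b' * b = 1)
    (hbr : a * b * a = b * a * b) : a * b * a' = b' * a * b :=
  calc a * b * a' = b' * b * (a * b) * a' := by rw [hb'b, one_mul]
    _ = b' * (a * b * a) * a' := by rw [hbr]; simp only [mul_assoc]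
    _ = b' * a * b := by simp only [mul_assoc, haa', mul_one]

theorem conj_reflection_of_braid (haa' : a * a' = 1) (ha'a : a' * a = 1)
    (hbb' : b * b' = 1) (hb'b : b' * b = 1) (hbr : a * b * a = b * a * b)
    (hub : Commute u b) (hub' : Commute u b') (hre : u * a * u * a = a * u * a * u) :
    a' * u * a * b * (a' * u * a) * b = b * (a' * u * a) * b * (a' * u * a) := by
  have hab := mul_mul_inv_eq_of_braid haa' hb'b hbr
  -- by `hb` both sides are `a' * _ * a` of words in `u` and `a * b * a' = b' * a * b`
  have hb : b = a' * (a * b * a') * a := by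
    simp only [mul_assoc, ha'a, mul_one, ← mul_assoc a' a, one_mul]
  have hl : u * (b' * a * b) * u * (b' * a * b) = b' * (a * u * a * u) * b :=
    calc u * (b' * a * b) * u * (b' * a * b) = b' * (u * a * (b * u * b')) * a * b := by
          simp only [mul_assoc, hub'.left_comm]
      _ = b' * (a * u * a * u) * b := by
          rw [← hub.eq, mul_assoc u b b', hbb', mul_one, ← hre]; simp only [mul_assoc]
  have hr : b' * a * b * u * (b' * a * b) * u = b' * (a * u * a * u) * b :=
    calc b' * a * b * u * (b' * a * b) * u = b' * a * (b * u * b') * a * b * u := by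
          simp only [mul_assoc]
      _ = b' * (a * u * a * u) * b := by
          rw [← hub.eq, mul_assoc u b b', hbb', mul_one]; simp only [mul_assoc, hub.eq]
  calc a' * u * a * b * (a' * u * a) * b
      = a' * (u * (a * b * a') * u * (a * b * a')) * a := by
        rw [hb]; simp only [mul_assoc, ha'a, ← mul_assoc a a', haa', one_mul]
    _ = a' * ((a * b * a') * u * (a * b * a') * u) * a := by rw [hab, hl, hr]
    _ = b * (a' * u * a) * b * (a' * u * a) := by
        rw [hb]; simp only [mul_assoc, ha'a, ← mul_assoc a a', haa', one_mul]

theorem mul_conj_eq_conj_mul_of_reflection (haa' : a * a' = 1) (ha'a : a' * a = 1)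
    (hwa : Commute w a) (hwa' : Commute w a') (hwv : w * v = u * w)
    (hre : u * a * u * a = a * u * a * u) :
    u * w * (a * v * a') = a' * u * a * (u * w) := by
  have hinv : u * a * u * a' = a' * u * a * u :=
    calc u * a * u * a' = a' * (a * u * a * u) * a' := by
          simp only [mul_assoc, ← mul_assoc a' a, ha'a, one_mul]
      _ = a' * u * a * u := by rw [← hre]; simp only [mul_assoc, haa', mul_one]
  calc u * w * (a * v * a') = u * a * (w * v) * a' := by simp only [mul_assoc, hwa.left_comm]
    _ = u * a * u * a' * w := by rw [hwv]; simp only [mul_assoc, hwa'.eq]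
    _ = a' * u * a * (u * w) := by rw [hinv]; simp only [mul_assoc]

end Monoid

namespace QCB

section Embedding

variable {m k : ℕ} {A : Type*} [Semiring A]

/-- `X ⊗ 1` on `κ × ρ`, transported to `ι` along `e`. -/
def blockEmbed {ι κ ρ : Type*} [Fintype κ] [DecidableEq ρ] (e : ι ≃ κ × ρ)
    (X : Matrix κ κ A) : Matrix ι ι A :=
  (blockDiagonal fun _ : ρ => X).submatrix e e

lemma blockEmbed_mul {ι κ ρ : Type*} [Fintype ι] [Fintype κ] [Fintype ρ] [DecidableEq ρ]
    (e : ι ≃ κ × ρ) (X Y : Matrix κ κ A) : blockEmbed e X * blockEmbed e Y = blockEmbed e (X * Y) := by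
  rw [blockEmbed, blockEmbed, blockEmbed, submatrix_mul_equiv, ← blockDiagonal_mul]

lemma blockEmbed_one {ι κ ρ : Type*} [Fintype κ] [DecidableEq κ] [DecidableEq ρ]
    [DecidableEq ι] (e : ι ≃ κ × ρ) : blockEmbed e (1 : Matrix κ κ A) = 1 := by
  rw [blockEmbed, show (fun _ : ρ => (1 : Matrix κ κ A)) = 1 from rfl, blockDiagonal_one,
    submatrix_one_equiv]

def splitPair (i j : Fin k) (hij : i ≠ j) :
    (Fin k → Fin m) ≃ (Fin m × Fin m) × ({l : Fin k // l ≠ i ∧ l ≠ j} → Fin m) where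
  toFun a := ((a i, a j), fun l => a l)
  invFun x l := if h : l = i then x.1.1 else if h' : l = j then x.1.2 else x.2 ⟨l, h, h'⟩
  left_inv a := by
    funext l
    by_cases h : l = i
    · subst h; simp
    · by_cases h' : l = j
      · subst h'; simp [h]
      · simp [h, h']
  right_inv x := by
    obtain ⟨⟨x1, x2⟩, r⟩ := x
    refine Prod.ext (Prod.ext ?_ ?_) (funext fun l => ?_)
    · simp
    · simp [hij.symm]
    · simp [l.2.1, l.2.2]

def splitTriple (i j l : Fin k) (hij : i ≠ j) (hil : i ≠ l) (hjl : j ≠ l) :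
    (Fin k → Fin m) ≃
      (Fin m × Fin m × Fin m) × ({t : Fin k // t ≠ i ∧ t ≠ j ∧ t ≠ l} → Fin m) where
  toFun a := ((a i, a j, a l), fun t => a t)
  invFun x t :=
    if h : t = i then x.1.1 else if h' : t = j then x.1.2.1
    else if h'' : t = l then x.1.2.2 else x.2 ⟨t, h, h', h''⟩
  left_inv a := by
    funext t
    by_cases h : t = i
    · subst h; simp
    · by_cases h' : t = j
      · subst h'; simp [h]
      · by_cases h'' : t = l
        · subst h''; simp [h, h']
        · simp [h, h', h'']
  right_inv x := by
    obtain ⟨⟨x1, x2, x3⟩, r⟩ := x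
    refine Prod.ext (Prod.ext ?_ (Prod.ext ?_ ?_)) (funext fun t => ?_)
    · simp
    · simp [hij.symm]
    · simp [hil.symm, hjl.symm]
    · simp [t.2.1, t.2.2.1, t.2.2.2]

lemma op2At_eq_blockEmbed (i j : Fin k) (hij : i ≠ j) (X : M2 m A) :
    op2At k X i j = blockEmbed (splitPair i j hij) X := by
  ext a b
  simp [op2At, blockEmbed, blockDiagonal_apply, splitPair, funext_iff]

lemma op2At_mul_op2At (i j : Fin k) (hij : i ≠ j) (X Y : M2 m A) :
    op2At k X i j * op2At k Y i j = op2At k (X * Y) i j := by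
  simp only [op2At_eq_blockEmbed i j hij, blockEmbed_mul]

lemma op2At_one (i j : Fin k) (hij : i ≠ j) : op2At k (1 : M2 m A) i j = 1 := by
  rw [op2At_eq_blockEmbed i j hij, blockEmbed_one]

lemma op2At_eq_blockEmbed_e12 (i j l : Fin k) (hij : i ≠ j) (hil : i ≠ l) (hjl : j ≠ l)
    (X : M2 m A) : op2At k X i j = blockEmbed (splitTriple i j l hij hil hjl) (e12 X) := by
  ext a b
  simp only [op2At, blockEmbed, e12, kd, splitTriple, of_apply, ne_eq, mul_ite, mul_one, mul_zero,
    Equiv.coe_fn_mk, submatrix_apply, blockDiagonal_apply, funext_iff, Subtype.forall, and_imp]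
  rw [← ite_and]
  exact if_congr (by grind) rfl rfl

lemma op2At_eq_blockEmbed_e23 (i j l : Fin k) (hij : i ≠ j) (hil : i ≠ l) (hjl : j ≠ l)
    (X : M2 m A) : op2At k X j l = blockEmbed (splitTriple i j l hij hil hjl) (e23 X) := by
  ext a b
  simp only [op2At, blockEmbed, e23, kd, splitTriple, of_apply, ne_eq, mul_ite, ite_mul, mul_one,
    mul_zero, one_mul, zero_mul, Equiv.coe_fn_mk, submatrix_apply, blockDiagonal_apply, funext_iff,
    Subtype.forall, and_imp]
  rw [← ite_and]
  exact if_congr (by grind) rfl rfl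

lemma op1At_eq_op2At_f1 (t s : Fin k) (hts : t ≠ s) (L : M1 m A) :
    op1At k L t = op2At k (f1 L) t s := by
  ext a b
  simp only [op1At, op2At, f1, kd, of_apply, ne_eq, mul_ite, mul_one, mul_zero]
  rw [← ite_and]
  exact if_congr (by grind) rfl rfl

end Embedding

section ActsOn

variable {m k : ℕ} {A : Type*} [Semiring A]

/-- `X` acts only in the tensor factors in `S`, as the identity in the others. -/
def ActsOn (S : Finset (Fin k)) (X : MN m k A) : Prop :=
  (∀ a b l, l ∉ S → a l ≠ b l → X a b = 0) ∧
  ∀ a b a' b', (∀ l ∈ S, a l = a' l ∧ b l = b' l) → (∀ l ∉ S, a l = b l) →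
    (∀ l ∉ S, a' l = b' l) → X a b = X a' b'

variable {S T : Finset (Fin k)} {X Y : MN m k A}

lemma ActsOn.mul_apply_eq_zero (hX : ActsOn S X) (hY : ActsOn T Y) {a b : Fin k → Fin m}
    {l : Fin k} (hlS : l ∉ S) (hlT : l ∉ T) (hab : a l ≠ b l) : (X * Y) a b = 0 := by
  refine (mul_apply).trans (Finset.sum_eq_zero fun c _ => ?_)
  by_cases hac : a l = c l
  · rw [hY.1 c b l hlT (hac ▸ hab), mul_zero]
  · rw [hX.1 a c l hlS hac, zero_mul]

lemma ActsOn.mul_apply_of_disjoint (hST : Disjoint S T) (hX : ActsOn S X) (hY : ActsOn T Y)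
    (a b : Fin k → Fin m) :
    (X * Y) a b = X a (fun l => if l ∈ S then b l else a l) *
      Y (fun l => if l ∈ S then b l else a l) b := by
  rw [mul_apply, Finset.sum_eq_single_of_mem _ (Finset.mem_univ _)]
  intro c _ hc
  by_cases hac : ∀ l ∉ S, a l = c l
  · obtain ⟨l, hl⟩ : ∃ l, c l ≠ if l ∈ S then b l else a l :=
      Function.ne_iff.mp hc
    by_cases hlS : l ∈ S
    · rw [if_pos hlS] at hl
      rw [hY.1 c b l (Finset.disjoint_left.mp hST hlS) hl, mul_zero]
    · exact absurd (hac l hlS).symm (by rwa [if_neg hlS] at hl)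
  · push Not at hac
    obtain ⟨l, hlS, hl⟩ := hac
    rw [hX.1 a c l hlS hl, zero_mul]

lemma ActsOn.commute (hST : Disjoint S T) (hX : ActsOn S X) (hY : ActsOn T Y)
    (hYc : ∀ a b x, Commute (Y a b) x) : Commute X Y := by
  ext a b
  by_cases hab : ∀ l ∉ S, l ∉ T → a l = b l
  · rw [hX.mul_apply_of_disjoint hST hY, hY.mul_apply_of_disjoint hST.symm hX, (hYc _ _ _).eq]
    congr 1
    · refine hX.2 _ _ _ _ (fun l hl => ?_) (fun l hl => by simp [hl]) (fun l hl => ?_)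
      · simp [hl, Finset.disjoint_left.mp hST hl]
      · by_cases hlT : l ∈ T <;> simp [hlT, hab l hl]
    · refine hY.2 _ _ _ _ (fun l hl => ?_) (fun l hl => ?_) (fun l hl => by simp [hl])
      · simp [hl, Finset.disjoint_right.mp hST hl]
      · by_cases hlS : l ∈ S <;> simp [hlS, hl, hab l]
  · push Not at hab
    obtain ⟨l, hlS, hlT, hl⟩ := hab
    rw [hX.mul_apply_eq_zero hY hlS hlT hl, hY.mul_apply_eq_zero hX hlT hlS hl]

lemma actsOn_op1At (X : M1 m A) (t : Fin k) : ActsOn {t} (op1At k X t) := by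
  refine ⟨fun a b l hl hab => ?_, fun a b a' b' hS ha hb => ?_⟩
  · simp only [op1At, of_apply]
    rw [if_neg fun h => hab (h l (by simpa using hl)), mul_zero]
  · simp only [op1At, of_apply]
    obtain ⟨hat, hbt⟩ := hS t (Finset.mem_singleton_self t)
    rw [hat, hbt, if_pos fun l hl => ha l (by simpa using hl),
      if_pos fun l hl => hb l (by simpa using hl)]

lemma actsOn_op2At (X : M2 m A) (i j : Fin k) : ActsOn {i, j} (op2At k X i j) := by
  refine ⟨fun a b l hl hab => ?_, fun a b a' b' hS ha hb => ?_⟩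
  · simp only [op2At, of_apply]
    rw [if_neg fun h => hab (h l (by simp_all) (by simp_all)), mul_zero]
  · simp only [op2At, of_apply]
    obtain ⟨hai, hbi⟩ := hS i (by simp)
    obtain ⟨haj, hbj⟩ := hS j (by simp)
    rw [hai, hbi, haj, hbj, if_pos fun l hi hj => ha l (by simp [hi, hj]),
      if_pos fun l hi hj => hb l (by simp [hi, hj])]

end ActsOn

section RAt

variable {m k : ℕ} {A : Type*} [Semiring A]

lemma RAt_of_le (X : M2 m A) {i : ℕ} (h : k ≤ i + 1) : RAt k X i = 1 :=
  dif_neg (by omega)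

lemma RAt_mul (X Y : M2 m A) (i : ℕ) : RAt k X i * RAt k Y i = RAt k (X * Y) i := by
  unfold RAt
  split_ifs
  · exact op2At_mul_op2At _ _ (by simp [Fin.ext_iff]) X Y
  · exact one_mul 1

lemma RAt_one (i : ℕ) : RAt k (1 : M2 m A) i = 1 := by
  unfold RAt
  split_ifs
  exacts [op2At_one _ _ (by simp [Fin.ext_iff]), rfl]

lemma RAt_mul_eq_one {X Y : M2 m A} (h : X * Y = 1) (i : ℕ) : RAt k X i * RAt k Y i = 1 := by
  rw [RAt_mul, h, RAt_one]

lemma op2At_apply_commute {Y : M2 m A} (hY : ∀ p q x, Commute (Y p q) x) (i j : Fin k)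
    (a b : Fin k → Fin m) (x : A) : Commute (op2At k Y i j a b) x := by
  simp only [op2At, of_apply]
  exact (hY _ _ x).mul_left (by split_ifs <;> simp)

lemma RAt_commute_of_add_two_le (X : M2 m A) {Y : M2 m A} (hY : ∀ p q x, Commute (Y p q) x)
    {i j : ℕ} (hij : i + 2 ≤ j) : Commute (RAt k X i) (RAt k Y j) := by
  unfold RAt
  split_ifs
  · refine (actsOn_op2At X _ _).commute ?_ (actsOn_op2At Y _ _) (op2At_apply_commute hY _ _)
    simp [Fin.ext_iff]
    omega
  all_goals simp

lemma op1Nat_zero_commute_RAt (L : M1 m A) {Y : M2 m A} (hY : ∀ p q x, Commute (Y p q) x)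
    {i : ℕ} (hi : 1 ≤ i) : Commute (op1Nat k L 0) (RAt k Y i) := by
  unfold op1Nat RAt
  split_ifs
  · refine (actsOn_op1At L _).commute ?_ (actsOn_op2At Y _ _) (op2At_apply_commute hY _ _)
    simp [Fin.ext_iff]
    omega
  all_goals simp

lemma RAt_braid {X : M2 m A} (hX : IsBraid X) {i : ℕ} (hi : i + 2 < k) :
    RAt k X i * RAt k X (i + 1) * RAt k X i = RAt k X (i + 1) * RAt k X i * RAt k X (i + 1) := by
  have hij : (⟨i, by omega⟩ : Fin k) ≠ ⟨i + 1, by omega⟩ := by simp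
  have hil : (⟨i, by omega⟩ : Fin k) ≠ ⟨i + 2, hi⟩ := by simp
  have hjl : (⟨i + 1, by omega⟩ : Fin k) ≠ ⟨i + 2, hi⟩ := by simp
  rw [RAt, RAt, dif_pos (by omega), dif_pos (by omega), op2At_eq_blockEmbed_e12 _ _ _ hij hil hjl,
    op2At_eq_blockEmbed_e23 _ _ _ hij hil hjl]
  simp only [blockEmbed_mul]
  exact congrArg _ hX

lemma RAt_reflection {X : M2 m A} (L : M1 m A)
    (hLX : f1 L * X * f1 L * X = X * f1 L * X * f1 L) :
    op1Nat k L 0 * RAt k X 0 * op1Nat k L 0 * RAt k X 0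
      = RAt k X 0 * op1Nat k L 0 * RAt k X 0 * op1Nat k L 0 := by
  by_cases hk : 1 < k
  · have h01 : (⟨0, by omega⟩ : Fin k) ≠ ⟨1, hk⟩ := by simp
    rw [RAt, dif_pos hk, op1Nat, dif_pos (by omega), op1At_eq_op2At_f1 _ _ h01]
    simp only [op2At_mul_op2At _ _ h01, hLX]
  · simp only [RAt_of_le (k := k) X (i := 0) (by omega), mul_one, one_mul]

end RAt

section Chains

variable {m K : ℕ} {A : Type*} [Semiring A] {R R' : M2 m A} (L : M1 m A)

lemma Lunder_commute_RAt {Y : M2 m A} (hY : ∀ p q x, Commute (Y p q) x) {j i : ℕ}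
    (hji : j + 1 ≤ i) : Commute (Lunder K R R' L j) (RAt K Y i) := by
  induction j generalizing i with
  | zero => exact op1Nat_zero_commute_RAt L hY hji
  | succ j ih =>
    exact ((RAt_commute_of_add_two_le R' hY (by omega)).mul_left (ih (by omega))).mul_left
      (RAt_commute_of_add_two_le R hY (by omega))

lemma LunderChainRev_commute_RAt {Y : M2 m A} (hY : ∀ p q x, Commute (Y p q) x) {j i : ℕ}
    (hji : j ≤ i) : Commute (LunderChainRev K R R' L j) (RAt K Y i) := by
  induction j with
  | zero => exact Commute.one_left _
  | succ j ih => exact (Lunder_commute_RAt L hY (by omega)).mul_left (ih (by omega))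

lemma Lunder_reflection (hR : ∀ p q x, Commute (R p q) x) (hR' : ∀ p q x, Commute (R' p q) x)
    (hRR' : R * R' = 1) (hR'R : R' * R = 1) (hbraid : IsBraid R)
    (hRE : f1 L * R * f1 L * R = R * f1 L * R * f1 L) (j : ℕ) :
    Lunder K R R' L j * RAt K R j * Lunder K R R' L j * RAt K R j
      = RAt K R j * Lunder K R R' L j * RAt K R j * Lunder K R R' L j := by
  induction j with
  | zero => exact RAt_reflection L hRE
  | succ j ih =>
    by_cases hj : j + 2 < K
    · exact conj_reflection_of_braid (RAt_mul_eq_one hRR' j) (RAt_mul_eq_one hR'R j)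
        (RAt_mul_eq_one hRR' (j + 1)) (RAt_mul_eq_one hR'R (j + 1)) (RAt_braid hbraid hj)
        (Lunder_commute_RAt L hR le_rfl) (Lunder_commute_RAt L hR' le_rfl) ih
    · simp only [RAt_of_le (k := K) R (i := j + 1) (by omega), mul_one, one_mul]

lemma LunderChainRev_mul_Lbar (hR : ∀ p q x, Commute (R p q) x)
    (hR' : ∀ p q x, Commute (R' p q) x) (hRR' : R * R' = 1) (hR'R : R' * R = 1)
    (hbraid : IsBraid R) (hRE : f1 L * R * f1 L * R = R * f1 L * R * f1 L) (j : ℕ) :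
    LunderChainRev K R R' L j * Lbar K R R' L j = Lunder K R R' L j * LunderChainRev K R R' L j := by
  induction j with
  | zero => exact (one_mul _).trans (mul_one _).symm
  | succ j ih =>
    exact mul_conj_eq_conj_mul_of_reflection (RAt_mul_eq_one hRR' j) (RAt_mul_eq_one hR'R j)
      (LunderChainRev_commute_RAt L hR le_rfl) (LunderChainRev_commute_RAt L hR' le_rfl) ih
      (Lunder_reflection L hR hR' hRR' hR'R hbraid hRE j)

theorem LbarChain_eq_LunderChainRev (hR : ∀ p q x, Commute (R p q) x)
    (hR' : ∀ p q x, Commute (R' p q) x) (hRR' : R * R' = 1) (hR'R : R' * R = 1)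
    (hbraid : IsBraid R) (hRE : f1 L * R * f1 L * R = R * f1 L * R * f1 L) (j : ℕ) :
    LbarChain K R R' L j = LunderChainRev K R R' L j := by
  induction j with
  | zero => rfl
  | succ j ih =>
    rw [LbarChain, LunderChainRev, ih, LunderChainRev_mul_Lbar L hR hR' hRR' hR'R hbraid hRE]

end Chains

section Lift

variable {α β : Type*} [Semiring α] [Semiring β] (f : α →+* β) {m : ℕ}

lemma e12_map (X : M2 m α) : e12 (X.map f) = (e12 X).map f := by
  ext p q
  simp [e12, kd, apply_ite f]

lemma e23_map (X : M2 m α) : e23 (X.map f) = (e23 X).map f := by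
  ext p q
  simp [e23, kd, apply_ite f]

lemma IsBraid.map {R : M2 m α} (hR : IsBraid R) : IsBraid (R.map f) := by
  rw [IsBraid, e12_map, e23_map, ← Matrix.map_mul, ← Matrix.map_mul, ← Matrix.map_mul,
    ← Matrix.map_mul, hR]

end Lift

end QCB

theorem statement6_general {m : ℕ} (R R' : M2 m ℂ)
    (hbraid : IsBraid R) (hRR' : R * R' = 1) (hR'R : R' * R = 1)
    (A : Type*) [Ring A] [Algebra ℂ A] (L : M1 m A)
    (hRE : f1 L * lft A R * f1 L * lft A R = lft A R * f1 L * lft A R * f1 L)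
    (k : ℕ) :
    LbarChain k (lft A R) (lft A R') L k = LunderChainRev k (lft A R) (lft A R') L k := by
  have hlift {X Y : M2 m ℂ} (h : X * Y = 1) : lft A X * lft A Y = 1 := by
    rw [lft, lft, ← Matrix.map_mul, h, Matrix.map_one _ (map_zero _) (map_one _)]
  exact LbarChain_eq_LunderChainRev L (fun _ _ => Algebra.commutes _)
    (fun _ _ => Algebra.commutes _) (hlift hRR') (hlift hR'R)
    (hbraid.map (algebraMap ℂ A)) hRE k

/-- For a matrix `L` over `𝔄` satisfying the reflection equation, the two products of
R-copies coincide: `L_{\bar1} L_{\bar2} ⋯ L_{\bar k} = L_{\underline k} ⋯ L_{\underline 1}`. -/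
theorem statement6 {m : ℕ} (hm : 1 ≤ m) (R R' : M2 m ℂ)
    (hbraid : IsBraid R) (hRR' : R * R' = 1) (hR'R : R' * R = 1)
    (A : Type*) [Ring A] [Algebra ℂ A] (L : M1 m A)
    (hRE : f1 L * lft A R * f1 L * lft A R = lft A R * f1 L * lft A R * f1 L)
    (k : ℕ) (hk : 1 ≤ k) :
    LbarChain k (lft A R) (lft A R') L k = LunderChainRev k (lft A R) (lft A R') L k :=
  statement6_general R R' hbraid hRR' hR'R A L hRE k
end

section
/- Let 𝔄 be a unital associative ℂ-algebra, q, γ ∈ ℂ∖{0}, and let L, M, T be m×m matrices over 𝔄 and μ₁,…,μ_n ∈ 𝔄 invertible pairwise-commuting elements commuting with every entry of L and of M, with μ_α − μ_β invertible for α ≠ β (inverses commuting with the μ's and with entries of L, M). Suppose: L·P^α = P^α·L = qμ_α·P^α where P^α := ∏_{β≠α}(L − qμ_β·I)/(q(μ_α − μ_β)); T·M = L·T; and γ²(P^αT)μ_β = q^{2δ_{αβ}}μ_β(P^αT) for all α, β. Define S^α := ∏_{β≠α}(M − γ²q^{−1}μ_β·I)/(γ²q^{−1}(μ_α − μ_β)).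 Then P^α·T·S^β = δ_{αβ}·P^α·T for all α, β; moreover, if additionally Σ_{α=1}^n P^α = I and Σ_{α=1}^n S^α = I, then P^α·T = T·S^α for every α. -/
open QCB Matrix

/-!
`M` acts on `P^α T` from the right as the scalar `γ² q⁻¹ μ_α`: indeed
`P^α T M = P^α L T = q μ_α P^α T`, and the twisted relation `γ² P^α T μ_α = q² μ_α P^α T`
moves `μ_α` to the right. Hence each factor of `S^β` acts on `P^α T` as
`(μ_α − μ_σ)(μ_β − μ_σ)⁻¹`, which is `1` for every `σ` when `β = α`, and vanishes at `σ = α`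
otherwise. The second claim follows by inserting `∑_β P^β = I` in front of `T S^α`.
-/

/-- Right multiplication by `(a - bᵢ) eᵢ` preserves the relation `X M = X a`. -/
theorem mul_prod_map_sub_mul_of_mul_eq_mul {R ι : Type*} [Ring R] {X M a : R}
    (hX : X * M = X * a) (haM : Commute a M) (b e : ι → R)
    (hbM : ∀ i, Commute (b i) M) (hba : ∀ i, Commute (b i) a)
    (heM : ∀ i, Commute (e i) M) (hea : ∀ i, Commute (e i) a) (l : List ι) :
    X * (l.map fun i => (M - b i) * e i).prod = X * (l.map fun i => (a - b i) * e i).prod := by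
  induction l generalizing X with
  | nil => rfl
  | cons i l ih =>
    have hyM : Commute ((a - b i) * e i) M := (haM.sub_left (hbM i)).mul_left (heM i)
    have hya : Commute ((a - b i) * e i) a :=
      ((Commute.refl a).sub_left (hba i)).mul_left (hea i)
    have hXy : X * ((a - b i) * e i) * M = X * ((a - b i) * e i) * a := by
      rw [mul_assoc, hyM.eq, ← mul_assoc, hX, mul_assoc, ← hya.eq, ← mul_assoc]
    have hXi : X * (M - b i) = X * (a - b i) := by rw [mul_sub, hX, mul_sub]
    simp only [List.map_cons, List.prod_cons]
    calc X * ((M - b i) * e i * (l.map fun i => (M - b i) * e i).prod)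
        = X * (M - b i) * e i * (l.map fun i => (M - b i) * e i).prod := by
          simp only [mul_assoc]
      _ = X * ((a - b i) * e i) * (l.map fun i => (M - b i) * e i).prod := by
          rw [hXi]; simp only [mul_assoc]
      _ = X * ((a - b i) * e i) * (l.map fun i => (a - b i) * e i).prod := ih hXy
      _ = X * ((a - b i) * e i * (l.map fun i => (a - b i) * e i).prod) := mul_assoc _ _ _

theorem Matrix.commute_diagonal_const {n R : Type*} [Fintype n] [DecidableEq n] [Ring R]
    {x : R} {Y : Matrix n n R} (h : ∀ i j, Commute x (Y i j)) :
    Commute (diagonal fun _ => x) Y := by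
  ext i j
  simp [diagonal_mul, mul_diagonal, (h i j).eq]

theorem Matrix.commute_diagonal_const_const {n R : Type*} [Fintype n] [DecidableEq n] [Ring R]
    {x y : R} (h : Commute x y) :
    Commute (diagonal fun _ : n => x) (diagonal fun _ => y) :=
  commute_diagonal_const fun i j => by
    by_cases hij : i = j <;> simp [hij, h]

theorem QCB.mul_projGen_eq_ite {m n : ℕ} {A : Type*} [Ring A] [Algebra ℂ A] {c : ℂ}
    (hc : c ≠ 0) {M X : M1 m A} {μ : Fin n → A} {ν : Fin n → Fin n → A}
    (hμcomm : ∀ α β, μ α * μ β = μ β * μ α)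
    (hμM : ∀ α a b, μ α * M a b = M a b * μ α)
    (hν : ∀ α β, α ≠ β → (μ α - μ β) * ν α β = 1)
    (hνμ : ∀ α β σ, ν α β * μ σ = μ σ * ν α β)
    (hνM : ∀ α β a b, ν α β * M a b = M a b * ν α β) {α : Fin n}
    (hX : X * M = X * diagonal fun _ => c • μ α) (β : Fin n) :
    X * projGen c M μ ν β = if α = β then X else 0 := by
  have hcμ : ∀ σ τ, Commute (c • μ σ) (c • μ τ) := fun σ τ =>
    (Commute.smul_left (hμcomm σ τ) c).smul_right c
  have hcμM : ∀ σ a b, Commute (c • μ σ) (M a b) := fun σ a b =>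
    Commute.smul_left (hμM σ a b) c
  have hcν : ∀ σ, Commute (c⁻¹ • ν β σ) (c • μ α) := fun σ =>
    (Commute.smul_left (hνμ β σ α) _).smul_right _
  have hcνM : ∀ σ a b, Commute (c⁻¹ • ν β σ) (M a b) := fun σ a b =>
    Commute.smul_left (hνM β σ a b) _
  have hfactor : ∀ σ, ((diagonal fun _ => c • μ α) - diagonal fun _ => c • μ σ) *
      (diagonal fun _ => c⁻¹ • ν β σ) = diagonal fun _ : Fin m => (μ α - μ σ) * ν β σ := by
    intro σ
    rw [diagonal_sub, diagonal_mul_diagonal]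
    congr 1
    funext
    rw [← smul_sub, smul_mul_smul_comm, mul_inv_cancel₀ hc, one_smul]
  rw [projGen, listProd, mul_prod_map_sub_mul_of_mul_eq_mul hX
    (commute_diagonal_const (hcμM α)) _ _ (fun σ => commute_diagonal_const (hcμM σ))
    (fun σ => commute_diagonal_const_const (hcμ σ α)) (fun σ => commute_diagonal_const (hcνM σ))
    (fun σ => commute_diagonal_const_const (hcν σ))]
  simp only [hfactor]
  split_ifs with hαβ
  · subst hαβ
    rw [List.prod_eq_one, mul_one]
    intro y hy
    obtain ⟨σ, hσ, rfl⟩ := List.mem_map.mp hy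
    have hσα : σ ≠ α := by simpa using (List.mem_filter.mp hσ).2
    rw [hν α σ hσα.symm, diagonal_one]
  · rw [List.prod_eq_zero, mul_zero]
    refine List.mem_map.mpr ⟨α, ?_, ?_⟩
    · simp [List.mem_filter, hαβ]
    · simp

theorem mul_mul_eq_smul_mul_mul {R : Type*} [Ring R] [Algebra ℂ R] {q γ : ℂ} (hq : q ≠ 0)
    {P L T M d : R} (hPL : P * L = q • (d * P)) (hTM : T * M = L * T)
    (hd : γ ^ 2 • (P * T * d) = q ^ 2 • (d * (P * T))) :
    P * T * M = (γ ^ 2 * q⁻¹) • (P * T * d) := by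
  calc P * T * M = q • (d * (P * T)) := by
        rw [mul_assoc, hTM, ← mul_assoc, hPL, smul_mul_assoc, mul_assoc]
    _ = q⁻¹ • q ^ 2 • (d * (P * T)) := by
        rw [smul_smul]; congr 1; field_simp
    _ = (γ ^ 2 * q⁻¹) • (P * T * d) := by
        rw [← hd, smul_smul, mul_comm]

/-- `P^α = projGen q L μ ν α` and `S^α = projGen (γ² q⁻¹) M μ ν α`. -/
theorem statement10_general {m n : ℕ} (q γ : ℂ) (hq : q ≠ 0) (hγ : γ ≠ 0)
    (A : Type*) [Ring A] [Algebra ℂ A] (L M T : M1 m A)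
    (μ : Fin n → A) (ν : Fin n → Fin n → A)
    (hμcomm : ∀ α β, μ α * μ β = μ β * μ α)
    (hμM : ∀ α a b, μ α * M a b = M a b * μ α)
    (hν : ∀ α β, α ≠ β → (μ α - μ β) * ν α β = 1 ∧ ν α β * (μ α - μ β) = 1)
    (hνμ : ∀ α β σ, ν α β * μ σ = μ σ * ν α β)
    (hνM : ∀ α β a b, ν α β * M a b = M a b * ν α β)
    (hLP : ∀ α, L * projGen q L μ ν α = projGen q L μ ν α * L ∧
      L * projGen q L μ ν α =
        Matrix.diagonal (fun _ => q • μ α) * projGen q L μ ν α)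
    (hTM : T * M = L * T)
    (hPTμ : ∀ α β : Fin n,
      (γ ^ 2 : ℂ) • (projGen q L μ ν α * T * Matrix.diagonal fun _ => μ β) =
        (if α = β then q ^ 2 else 1 : ℂ) •
          (Matrix.diagonal (fun _ => μ β) * (projGen q L μ ν α * T))) :
    (∀ α β : Fin n,
      projGen q L μ ν α * T * projGen (γ ^ 2 * q⁻¹) M μ ν β =
        (if α = β then 1 else 0 : ℂ) • (projGen q L μ ν α * T)) ∧
    ((∑ α, projGen q L μ ν α) = 1 → (∑ α, projGen (γ ^ 2 * q⁻¹) M μ ν α) = 1 →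
      ∀ α, projGen q L μ ν α * T = T * projGen (γ ^ 2 * q⁻¹) M μ ν α) := by
  have hδ : ∀ α β, projGen q L μ ν α * T * projGen (γ ^ 2 * q⁻¹) M μ ν β =
      (if α = β then 1 else 0 : ℂ) • (projGen q L μ ν α * T) := by
    intro α β
    have hPL : projGen q L μ ν α * L = q • ((diagonal fun _ => μ α) * projGen q L μ ν α) := by
      rw [← (hLP α).1, (hLP α).2, ← smul_mul_assoc, ← diagonal_smul]
      rfl
    have hX := mul_mul_eq_smul_mul_mul hq hPL hTM (by simpa using hPTμ α α)
    rw [← mul_smul_comm, ← diagonal_smul] at hX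
    rw [mul_projGen_eq_ite (mul_ne_zero (pow_ne_zero 2 hγ) (inv_ne_zero hq)) hμcomm hμM
      (fun α β h => (hν α β h).1) hνμ hνM hX β]
    split_ifs <;> simp
  refine ⟨hδ, fun hP _ α => ?_⟩
  calc projGen q L μ ν α * T
      = ∑ β, (if β = α then 1 else 0 : ℂ) • (projGen q L μ ν β * T) := by simp
    _ = T * projGen (γ ^ 2 * q⁻¹) M μ ν α := by
        simp only [← hδ, ← Finset.sum_mul, hP, one_mul]

/-- Relation between the two families of spectral projectors `P^α` (built from `L`) and
`S^α` (built from `M`): `P^α T S^β = δ_{αβ} P^α T`, and, when both families resolve the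
identity, `P^α T = T S^α`.  Here `ν α β` plays the role of `(μ_α − μ_β)⁻¹`,
`P^α = projGen q L μ ν α` and `S^α = projGen (γ² q⁻¹) M μ ν α`. -/
theorem statement10 {m n : ℕ} (hm : 1 ≤ m) (hn : 1 ≤ n) (q γ : ℂ) (hq : q ≠ 0) (hγ : γ ≠ 0)
    (A : Type*) [Ring A] [Algebra ℂ A] (L M T : M1 m A)
    (μ : Fin n → A) (ν : Fin n → Fin n → A)
    (hμunit : ∀ α, IsUnit (μ α))
    (hμcomm : ∀ α β, μ α * μ β = μ β * μ α)
    (hμL : ∀ α a b, μ α * L a b = L a b * μ α)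
    (hμM : ∀ α a b, μ α * M a b = M a b * μ α)
    (hν : ∀ α β, α ≠ β → (μ α - μ β) * ν α β = 1 ∧ ν α β * (μ α - μ β) = 1)
    (hνμ : ∀ α β σ, ν α β * μ σ = μ σ * ν α β)
    (hνL : ∀ α β a b, ν α β * L a b = L a b * ν α β)
    (hνM : ∀ α β a b, ν α β * M a b = M a b * ν α β)
    (hLP : ∀ α, L * projGen q L μ ν α = projGen q L μ ν α * L ∧
      L * projGen q L μ ν α =
        Matrix.diagonal (fun _ => q • μ α) * projGen q L μ ν α)
    (hTM : T * M = L * T)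
    (hPTμ : ∀ α β : Fin n,
      (γ ^ 2 : ℂ) • (projGen q L μ ν α * T * Matrix.diagonal fun _ => μ β) =
        (if α = β then q ^ 2 else 1 : ℂ) •
          (Matrix.diagonal (fun _ => μ β) * (projGen q L μ ν α * T))) :
    (∀ α β : Fin n,
      projGen q L μ ν α * T * projGen (γ ^ 2 * q⁻¹) M μ ν β =
        (if α = β then 1 else 0 : ℂ) • (projGen q L μ ν α * T)) ∧
    ((∑ α, projGen q L μ ν α) = 1 → (∑ α, projGen (γ ^ 2 * q⁻¹) M μ ν α) = 1 →
      ∀ α, projGen q L μ ν α * T = T * projGen (γ ^ 2 * q⁻¹) M μ ν α) :=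
  statement10_general q γ hq hγ A L M T μ ν hμcomm hμM hν hνμ hνM hLP hTM hPTμ
end
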